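/- arXiv:2410.02388 — 5 statements merged into one kernel-verified Lean document; each statement's English description precedes it below -/
import Mathlib

section
/- Let X ⊆ ℝ^d be a nonempty compact convex set with diameter D := sup_{x,y ∈ X} ‖x − y‖, and let V : X → ℝ^d. For π ∈ X define GAP(π) := max_{x ∈ X} ⟨V(π), x − π⟩ and the tangent residual r(π) := min over a in the normal cone N_X(π) of ‖−V(π) + a‖. Then GAP(π) ≤ D · r(π) for every π ∈ X. -/
open scoped RealInnerProductSpace Pointwise

theorem stmt_5 {d : ℕ} (X : Set (EuclideanSpace ℝ (Fin d)))
    (hne : X.Nonempty) (hcomp : IsCompact X) (hconv : Convex ℝ X)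
    (V : EuclideanSpace ℝ (Fin d) → EuclideanSpace ℝ (Fin d)) (D : ℝ)
    (hD : D = sSup {r : ℝ | ∃ x ∈ X, ∃ y ∈ X, r = ‖x - y‖})
    (π : EuclideanSpace ℝ (Fin d)) (hπ : π ∈ X) :
    sSup ((fun x => ⟪V π, x - π⟫) '' X) ≤
      D * sInf ((fun a => ‖-V π + a‖) '' {a | ∀ x ∈ X, ⟪a, x - π⟫ ≤ 0}) := by
  set T : Set ℝ := (fun a => ‖-V π + a‖) '' {a | ∀ x ∈ X, ⟪a, x - π⟫ ≤ 0} with hT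
  have hTne : T.Nonempty := ⟨‖-V π + 0‖, 0, fun x hx => by simp, rfl⟩
  have hI0 : 0 ≤ sInf T := Real.sInf_nonneg (by rintro r ⟨a, _, rfl⟩; positivity)
  obtain ⟨C, hC⟩ := hcomp.isBounded.subset_ball 0
  have hbdd : BddAbove {r : ℝ | ∃ x ∈ X, ∃ y ∈ X, r = ‖x - y‖} := by
    refine ⟨2 * C, ?_⟩
    rintro r ⟨x, hx, y, hy, rfl⟩
    have hx' := hC hx
    have hy' := hC hy
    simp only [Metric.mem_ball, dist_zero_right] at hx' hy'
    calc ‖x - y‖ ≤ ‖x‖ + ‖y‖ := norm_sub_le _ _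
      _ ≤ 2 * C := by linarith
  have hD0 : 0 ≤ D := by
    obtain ⟨x₀, hx₀⟩ := hne
    rw [hD]
    have h0 : (0 : ℝ) ∈ {r : ℝ | ∃ x ∈ X, ∃ y ∈ X, r = ‖x - y‖} :=
      ⟨x₀, hx₀, x₀, hx₀, by simp⟩
    exact le_csSup hbdd h0
  have hdist : ∀ x ∈ X, ‖x - π‖ ≤ D := fun x hx => by
    rw [hD]; exact le_csSup hbdd ⟨x, hx, π, hπ, rfl⟩
  apply Real.sSup_le
  · rintro r ⟨x, hx, rfl⟩
    have key : ∀ a ∈ {a : EuclideanSpace ℝ (Fin d) | ∀ x ∈ X, ⟪a, x - π⟫ ≤ 0},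
        ⟪V π, x - π⟫ ≤ D * ‖-V π + a‖ := by
      intro a ha
      have h1 : ⟪V π, x - π⟫ = ⟪V π - a, x - π⟫ + ⟪a, x - π⟫ := by
        rw [inner_sub_left]; ring
      have h2 : ⟪a, x - π⟫ ≤ 0 := ha x hx
      have h3 : ⟪V π - a, x - π⟫ ≤ ‖V π - a‖ * ‖x - π‖ := real_inner_le_norm _ _
      have h4 : ‖V π - a‖ = ‖-V π + a‖ := by
        rw [show -V π + a = a - V π by abel, norm_sub_rev]
      have h5 : ‖V π - a‖ * ‖x - π‖ ≤ ‖V π - a‖ * D :=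
        mul_le_mul_of_nonneg_left (hdist x hx) (norm_nonneg _)
      calc ⟪V π, x - π⟫ = ⟪V π - a, x - π⟫ + ⟪a, x - π⟫ := h1
        _ ≤ ‖V π - a‖ * ‖x - π‖ := by linarith
        _ ≤ ‖V π - a‖ * D := h5
        _ = D * ‖-V π + a‖ := by rw [h4]; ring
    calc ⟪V π, x - π⟫ ≤ sInf ((D • T : Set ℝ)) := by
          refine le_csInf (hTne.smul_set) ?_
          rintro b ⟨t, ⟨a, ha, rfl⟩, rfl⟩
          simpa [smul_eq_mul] using key a ha
      _ = D * sInf T := by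
          rw [Real.sInf_smul_of_nonneg hD0, smul_eq_mul]
  · exact mul_nonneg hD0 hI0
end

section
/- Let X ⊆ ℝ^d be compact convex and V : X → ℝ^d a monotone operator, i.e., ⟨V(x) − V(y), x − y⟩ ≤ 0 for all x, y ∈ X. Let π* ∈ X satisfy ⟨V(π*), x − π*⟩ ≤ 0 for all x ∈ X (π* is a Nash-equilibrium-type point). Suppose π^μ ∈ X, σ ∈ X, and μ > 0 satisfy the first-order optimality condition ⟨V(π^μ) − μ(π^μ − σ), π^μ − x⟩ ≥ 0 for all x ∈ X. Then ⟨π^μ − σ, π* − π^μ⟩ ≥ 0. -/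
open scoped RealInnerProductSpace

theorem stmt_6 {d : ℕ} (X : Set (EuclideanSpace ℝ (Fin d)))
    (hcomp : IsCompact X) (hconv : Convex ℝ X)
    (V : EuclideanSpace ℝ (Fin d) → EuclideanSpace ℝ (Fin d))
    (hmono : ∀ x ∈ X, ∀ y ∈ X, ⟪V x - V y, x - y⟫ ≤ 0)
    (πstar : EuclideanSpace ℝ (Fin d)) (hπstar : πstar ∈ X)
    (hNE : ∀ x ∈ X, ⟪V πstar, x - πstar⟫ ≤ 0)
    (πμ σ : EuclideanSpace ℝ (Fin d)) (hπμ : πμ ∈ X) (hσ : σ ∈ X)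
    (μ : ℝ) (hμ : 0 < μ)
    (hopt : ∀ x ∈ X, 0 ≤ ⟪V πμ - μ • (πμ - σ), πμ - x⟫) :
    0 ≤ ⟪πμ - σ, πstar - πμ⟫ := by
  have h1 := hopt πstar hπstar
  have h2 := hmono πμ hπμ πstar hπstar
  have h3 := hNE πμ hπμ
  rw [inner_sub_left] at h1 h2
  rw [real_inner_smul_left] at h1
  have hV : ⟪V πμ, πμ - πstar⟫ ≤ 0 := by
    have : ⟪V πstar, πμ - πstar⟫ ≤ 0 := h3
    linarith
  have h4 : μ * ⟪πμ - σ, πμ - πstar⟫ ≤ 0 := by linarith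
  have h5 : ⟪πμ - σ, πμ - πstar⟫ ≤ 0 := by nlinarith
  have h6 : ⟪πμ - σ, πstar - πμ⟫ = -⟪πμ - σ, πμ - πstar⟫ := by
    rw [← inner_neg_right, neg_sub]
  linarith
end

section
/- Let (b_t) be a sequence of nonnegative reals, κ, θ, C > 0, and suppose that for all t ≥ 1, (t + 2θ/κ)·b_{t+1} ≤ (t − 1 + 2θ/κ)·b_t + 2C²/(κ(κt + 2θ)). Then for all t ≥ 1, b_{t+1} ≤ (2θ/(κt + 2θ))·(b_1 + (C²/(κθ))·ln(κt/(2θ) + 1)). -/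
theorem stmt_8 (b : ℕ → ℝ) (κ θ C : ℝ) (hκ : 0 < κ) (hθ : 0 < θ) (hC : 0 < C)
    (hnonneg : ∀ t, 0 ≤ b t)
    (hrec : ∀ t : ℕ, 1 ≤ t →
      ((t : ℝ) + 2 * θ / κ) * b (t + 1) ≤
        ((t : ℝ) - 1 + 2 * θ / κ) * b t + 2 * C^2 / (κ * (κ * (t : ℝ) + 2 * θ))) :
    ∀ t : ℕ, 1 ≤ t →
      b (t + 1) ≤ (2 * θ / (κ * (t : ℝ) + 2 * θ)) *
        (b 1 + (C^2 / (κ * θ)) * Real.log (κ * (t : ℝ) / (2 * θ) + 1)) := by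
  have hlog : ∀ x y : ℝ, 0 < y → y ≤ x → (x - y) / x ≤ Real.log x - Real.log y := by
    intro x y hy hyx
    have hx : 0 < x := lt_of_lt_of_le hy hyx
    have h1 := Real.log_le_sub_one_of_pos (show (0:ℝ) < y / x from div_pos hy hx)
    rw [Real.log_div (ne_of_gt hy) (ne_of_gt hx)] at h1
    have h2 : (x - y) / x = 1 - y / x := by field_simp
    linarith
  -- term bound
  have htb : ∀ x : ℝ, 0 ≤ x →
      2 * C ^ 2 / (κ * (κ * (x + 1) + 2 * θ)) ≤
        (2 * C ^ 2 / κ ^ 2) * (Real.log (κ * (x + 1) + 2 * θ) - Real.log (κ * x + 2 * θ)) := by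
    intro x hx
    have hY : 0 < κ * x + 2 * θ := by positivity
    have hX : 0 < κ * (x + 1) + 2 * θ := by positivity
    have h1 := hlog (κ * (x + 1) + 2 * θ) (κ * x + 2 * θ) hY (by nlinarith)
    have h2 : (κ * (x + 1) + 2 * θ) - (κ * x + 2 * θ) = κ := by ring
    rw [h2] at h1
    have heq : 2 * C ^ 2 / (κ * (κ * (x + 1) + 2 * θ)) =
        (2 * C ^ 2 / κ ^ 2) * (κ / (κ * (x + 1) + 2 * θ)) := by
      field_simp
    rw [heq]
    apply mul_le_mul_of_nonneg_left h1 (by positivity)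
  have key : ∀ t : ℕ, 1 ≤ t →
      ((t : ℝ) + 2 * θ / κ) * b (t + 1) ≤
        (2 * θ / κ) * b 1 +
          (2 * C ^ 2 / κ ^ 2) * (Real.log (κ * (t : ℝ) + 2 * θ) - Real.log (2 * θ)) := by
    intro t ht
    induction t with
    | zero => omega
    | succ n ih =>
      rcases Nat.lt_or_ge n 1 with h1 | h1
      · interval_cases n
        have hr := hrec 1 le_rfl
        have ht0 := htb 0 le_rfl
        push_cast at hr ⊢
        have e1 : κ * (0 + 1) + 2 * θ = κ * 1 + 2 * θ := by ring
        have e2 : κ * (0:ℝ) + 2 * θ = 2 * θ := by ring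
        rw [e1, e2] at ht0
        nlinarith [hnonneg 1]
      · have ihn := ih h1
        have hr := hrec (n + 1) (by omega)
        have ht0 := htb (n : ℝ) (by positivity)
        push_cast at hr ihn ⊢
        nlinarith
  intro t ht
  have hk := key t ht
  have hX : 0 < κ * (t : ℝ) + 2 * θ := by positivity
  have hpos : 0 < (t : ℝ) + 2 * θ / κ := by positivity
  have hlogeq : Real.log (κ * (t : ℝ) / (2 * θ) + 1) =
      Real.log (κ * (t : ℝ) + 2 * θ) - Real.log (2 * θ) := by
    rw [show κ * (t : ℝ) / (2 * θ) + 1 = (κ * (t : ℝ) + 2 * θ) / (2 * θ) by field_simp]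
    rw [Real.log_div (ne_of_gt hX) (by positivity)]
  rw [hlogeq]
  set L := Real.log (κ * (t : ℝ) + 2 * θ) - Real.log (2 * θ) with hL
  rw [show (2 * θ / (κ * (t : ℝ) + 2 * θ)) * (b 1 + C ^ 2 / (κ * θ) * L) =
      ((2 * θ / κ) * b 1 + (2 * C ^ 2 / κ ^ 2) * L) / ((t : ℝ) + 2 * θ / κ) by
    field_simp]
  rw [le_div_iff₀ hpos]
  linarith [hk, mul_comm (b (t + 1)) ((t : ℝ) + 2 * θ / κ)]
end

section
/- Let η, L, μ > 0 with η ≤ μ/(L+μ)², let X ⊆ ℝ^d be compact convex, V : X → ℝ^d monotone and L-Lipschitz, ŝ ∈ X a reference point, and p ∈ X the stationary point satisfying ⟨V(p) − μ(p − ŝ), p − x⟩ ≥ 0 for all x ∈ X. If π, π⁺ ∈ X satisfy the projected-gradient optimality condition ⟨η(V(π) − μ(π − ŝ)) − π⁺ + π, π⁺ − x⟩ ≥ 0 for all x ∈ X, then (1 + ημ)‖p − π⁺‖² ≤ ‖p − π‖². -/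
open scoped RealInnerProductSpace

set_option maxHeartbeats 1000000 in
theorem stmt_10 {d : ℕ} (X : Set (EuclideanSpace ℝ (Fin d)))
    (hcomp : IsCompact X) (hconv : Convex ℝ X)
    (V : EuclideanSpace ℝ (Fin d) → EuclideanSpace ℝ (Fin d))
    (η L μ : ℝ) (hη : 0 < η) (hL : 0 < L) (hμ : 0 < μ)
    (hηle : η ≤ μ / (L + μ)^2)
    (hmono : ∀ x ∈ X, ∀ y ∈ X, ⟪V x - V y, x - y⟫ ≤ 0)
    (hLip : ∀ x ∈ X, ∀ y ∈ X, ‖V x - V y‖ ≤ L * ‖x - y‖)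
    (shat p π πplus : EuclideanSpace ℝ (Fin d))
    (hshat : shat ∈ X) (hp : p ∈ X) (hπ : π ∈ X) (hπplus : πplus ∈ X)
    (hopt : ∀ x ∈ X, 0 ≤ ⟪V p - μ • (p - shat), p - x⟫)
    (hstep : ∀ x ∈ X, 0 ≤ ⟪η • (V π - μ • (π - shat)) - πplus + π, πplus - x⟫) :
    (1 + η * μ) * ‖p - πplus‖^2 ≤ ‖p - π‖^2 := by
  set u := π - p with hu
  set w := πplus - π with hw
  set Δ := V π - V p with hΔ
  have hupw : πplus - p = u + w := by rw [hu, hw]; abel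
  have h1 := hopt πplus hπplus
  have h2 := hstep p hp
  -- rewrite the step vector
  have hvec : η • (V π - μ • (π - shat)) - πplus + π
      = η • (V p - μ • (p - shat)) + (η • Δ - (η * μ) • u - w) := by
    rw [hΔ, hu, hw]; module
  have hFp : ⟪η • (V p - μ • (p - shat)), u + w⟫ ≤ 0 := by
    rw [real_inner_smul_left, ← hupw]
    have : ⟪V p - μ • (p - shat), πplus - p⟫ = -⟪V p - μ • (p - shat), p - πplus⟫ := by
      rw [← inner_neg_right]; congr 1; abel
    rw [this]
    have := mul_nonneg hη.le h1
    nlinarith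
  have hkey0 : 0 ≤ ⟪η • Δ - (η * μ) • u - w, u + w⟫ := by
    have := h2
    rw [hvec, hupw, inner_add_left] at this
    linarith [hFp]
  set A := ⟪Δ, u⟫ with hA'
  set B := ⟪Δ, w⟫ with hB'
  set s := ⟪u, w⟫ with hs'
  have hexp : ⟪η • Δ - (η * μ) • u - w, u + w⟫
      = η * A + η * B - η * μ * ‖u‖ ^ 2 - η * μ * s - s - ‖w‖ ^ 2 := by
    simp only [inner_sub_left, inner_add_right, real_inner_smul_left,
      real_inner_self_eq_norm_sq, hA', hB', hs']
    rw [real_inner_comm w u]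
    ring
  rw [hexp] at hkey0
  have hA : A ≤ 0 := by
    have := hmono π hπ p hp
    rwa [hA', hΔ, hu]
  have hB : B ≤ L * ‖u‖ * ‖w‖ := by
    calc B ≤ ‖Δ‖ * ‖w‖ := real_inner_le_norm Δ w
      _ ≤ L * ‖π - p‖ * ‖w‖ := by
          have := hLip π hπ p hp
          nlinarith [norm_nonneg w]
      _ = L * ‖u‖ * ‖w‖ := by rw [hu]
  have hs : -(‖u‖ * ‖w‖) ≤ s := by
    have := abs_real_inner_le_norm u w
    rw [← hs'] at this
    cases abs_le.mp this with
    | intro h _ => linarith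
  have hc : ‖p - πplus‖ ^ 2 = ‖u‖ ^ 2 + 2 * s + ‖w‖ ^ 2 := by
    have h' : ‖p - πplus‖ = ‖u + w‖ := by rw [← hupw, norm_sub_rev]
    rw [h', hs']
    exact norm_add_sq_real u w
  have hgoal2 : ‖p - π‖ ^ 2 = ‖u‖ ^ 2 := by rw [hu, norm_sub_rev]
  have hLμ : η * (L + μ) ^ 2 ≤ μ := by
    have hpos : (0:ℝ) < (L + μ) ^ 2 := by positivity
    rw [div_eq_mul_inv] at hηle
    calc η * (L + μ) ^ 2 ≤ μ * ((L + μ)^2)⁻¹ * (L + μ) ^ 2 := by nlinarith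
      _ = μ := by field_simp
  have hcnn : 0 ≤ ‖u‖ ^ 2 + 2 * s + ‖w‖ ^ 2 := by rw [← hc]; positivity
  have hη2 : η ^ 2 * (L + μ) ^ 2 ≤ η * μ := by
    calc η ^ 2 * (L + μ) ^ 2 = η * (η * (L + μ) ^ 2) := by ring
      _ ≤ η * μ := mul_le_mul_of_nonneg_left hLμ hη.le
  have hAM : 2 * η * (L + μ) * (‖u‖ * ‖w‖) ≤ η ^ 2 * (L + μ) ^ 2 * ‖u‖ ^ 2 + ‖w‖ ^ 2 := by
    nlinarith [sq_nonneg (η * (L + μ) * ‖u‖ - ‖w‖)]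
  have hss : s ≤ η * (L + μ) * (‖u‖ * ‖w‖) - η * μ * ‖u‖ ^ 2 - ‖w‖ ^ 2 := by
    nlinarith [mul_le_mul_of_nonneg_left hB hη.le,
      mul_le_mul_of_nonneg_left hs (mul_nonneg hη.le hμ.le),
      mul_nonpos_of_nonneg_of_nonpos hη.le hA]
  have hc2 : ‖u‖ ^ 2 + 2 * s + ‖w‖ ^ 2 ≤ (1 - η * μ) * ‖u‖ ^ 2 := by
    nlinarith [sq_nonneg ‖u‖]
  rw [hc, hgoal2]
  nlinarith [mul_le_mul_of_nonneg_left hc2 (mul_nonneg hη.le hμ.le),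
    sq_nonneg (η * μ * ‖u‖), hc2, hcnn]
end

section
/- Let X ⊆ ℝ^d be compact convex, and suppose π^t, π^{t−1} ∈ X satisfy, for some η, μ > 0, reference point ŝ ∈ X, and L-Lipschitz V: ⟨V(π^{t−1}) − μ(π^{t−1} − ŝ) − (1/η)(π^t − π^{t−1}), π^t − x⟩ ≥ 0 for all x ∈ X. Then the tangent residual satisfies r(π^t) ≤ ((1+ηL)/η)‖π^t − π^{t−1}‖ + μ‖π^{t−1} − ŝ‖, where r(π) := min_{a ∈ N_X(π)} ‖−V(π) + a‖. -/
open scoped RealInnerProductSpace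

theorem stmt_17 {d : ℕ} (X : Set (EuclideanSpace ℝ (Fin d)))
    (hcomp : IsCompact X) (hconv : Convex ℝ X)
    (V : EuclideanSpace ℝ (Fin d) → EuclideanSpace ℝ (Fin d))
    (η μ L : ℝ) (hη : 0 < η) (hμ : 0 < μ) (hL : 0 < L)
    (hLip : ∀ x ∈ X, ∀ y ∈ X, ‖V x - V y‖ ≤ L * ‖x - y‖)
    (shat πt πtm : EuclideanSpace ℝ (Fin d))
    (hshat : shat ∈ X) (hπt : πt ∈ X) (hπtm : πtm ∈ X)
    (hvi : ∀ x ∈ X,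
      0 ≤ ⟪V πtm - μ • (πtm - shat) - (1/η) • (πt - πtm), πt - x⟫) :
    sInf ((fun a => ‖-V πt + a‖) '' {a | ∀ x ∈ X, ⟪a, x - πt⟫ ≤ 0}) ≤
      ((1 + η * L) / η) * ‖πt - πtm‖ + μ * ‖πtm - shat‖ := by
  set a := V πtm - μ • (πtm - shat) - (1/η) • (πt - πtm) with ha
  have hmem : a ∈ {a | ∀ x ∈ X, ⟪a, x - πt⟫ ≤ 0} := by
    intro x hx
    have := hvi x hx
    have h : ⟪a, x - πt⟫ = -⟪a, πt - x⟫ := by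
      rw [← inner_neg_right]; congr 1; abel
    rw [h]; linarith
  have hbdd : BddBelow ((fun a => ‖-V πt + a‖) '' {a | ∀ x ∈ X, ⟪a, x - πt⟫ ≤ 0}) :=
    ⟨0, by rintro _ ⟨b, -, rfl⟩; exact norm_nonneg _⟩
  have h1 : sInf ((fun a => ‖-V πt + a‖) '' {a | ∀ x ∈ X, ⟪a, x - πt⟫ ≤ 0}) ≤ ‖-V πt + a‖ :=
    csInf_le hbdd ⟨a, hmem, rfl⟩
  refine h1.trans ?_
  have heq : -V πt + a = (V πtm - V πt) + (-(μ • (πtm - shat))) + (-((1/η) • (πt - πtm))) := by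
    rw [ha]; abel
  have htri : ‖-V πt + a‖ ≤ ‖V πtm - V πt‖ + ‖μ • (πtm - shat)‖ + ‖(1/η) • (πt - πtm)‖ := by
    rw [heq]
    calc ‖(V πtm - V πt) + (-(μ • (πtm - shat))) + (-((1/η) • (πt - πtm)))‖
        ≤ ‖(V πtm - V πt) + (-(μ • (πtm - shat)))‖ + ‖-((1/η) • (πt - πtm))‖ := norm_add_le _ _
      _ ≤ ‖V πtm - V πt‖ + ‖-(μ • (πtm - shat))‖ + ‖-((1/η) • (πt - πtm))‖ := by
          gcongr; exact norm_add_le _ _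
      _ = ‖V πtm - V πt‖ + ‖μ • (πtm - shat)‖ + ‖(1/η) • (πt - πtm)‖ := by
          rw [norm_neg, norm_neg]
  have hlip : ‖V πtm - V πt‖ ≤ L * ‖πt - πtm‖ := by
    have := hLip πtm hπtm πt hπt
    rwa [norm_sub_rev πtm πt] at this
  have h2 : ‖μ • (πtm - shat)‖ = μ * ‖πtm - shat‖ := by
    rw [norm_smul, Real.norm_eq_abs, abs_of_pos hμ]
  have h3 : ‖(1/η) • (πt - πtm)‖ = (1/η) * ‖πt - πtm‖ := by
    rw [norm_smul, Real.norm_eq_abs, abs_of_pos (by positivity)]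
  have hcoef : (1 + η * L) / η = 1/η + L := by field_simp
  calc ‖-V πt + a‖ ≤ ‖V πtm - V πt‖ + ‖μ • (πtm - shat)‖ + ‖(1/η) • (πt - πtm)‖ := htri
    _ ≤ L * ‖πt - πtm‖ + μ * ‖πtm - shat‖ + (1/η) * ‖πt - πtm‖ := by
        rw [h2, h3]; linarith
    _ = ((1 + η * L) / η) * ‖πt - πtm‖ + μ * ‖πtm - shat‖ := by rw [hcoef]; ring
end
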